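/- arXiv:1211.5394 — 2 statements merged into one kernel-verified Lean document; each statement's English description precedes it below -/
import Mathlib

section
/- Let (W,S) be any Coxeter system with an S-preserving involution *. If y,w ∈ I_* and s ∈ Des_L(y) \ Des_L(w), then the integer μ^σ(y,w;s) is nonzero only if ℓ(w) − ℓ(y) is even and y < s⋉w in the Bruhat order. -/
open Polynomial LaurentPolynomial
open scoped Classical

noncomputable section

namespace TwistedKL

/-- The ring `𝒜 = ℤ[v,v⁻¹]` of Laurent polynomials over `ℤ`. -/
abbrev A𝕃 : Type := LaurentPolynomial ℤ

/-- The element `v ∈ 𝒜`. -/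
def vv : A𝕃 := LaurentPolynomial.T 1

/-- The element `q = v² ∈ 𝒜`. -/
def qq : A𝕃 := LaurentPolynomial.T 2

variable {B : Type} {W : Type} [Group W] {M : CoxeterMatrix B}

/-- The Bruhat order on a Coxeter group, via the subword property: `y ≤ w` iff every
reduced word for `w` has a subword whose product is `y`. -/
def BruhatLE (cs : CoxeterSystem M W) (y w : W) : Prop :=
  ∀ ω : List B, cs.IsReduced ω → cs.wordProd ω = w →
    ∃ ω' : List B, ω'.Sublist ω ∧ cs.wordProd ω' = y

/-- The strict Bruhat order. -/
def BruhatLT (cs : CoxeterSystem M W) (y w : W) : Prop :=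
  BruhatLE cs y w ∧ y ≠ w

/-- A Coxeter system is universal if the product of any two distinct simple generators has
infinite order. -/
def IsUniversal (cs : CoxeterSystem M W) : Prop :=
  ∀ i j : B, cs.simple i ≠ cs.simple j → ∀ n : ℕ, 0 < n → (cs.simple i * cs.simple j) ^ n ≠ 1

/-- An `S`-preserving involution `* : W → W` (group automorphism of order at most 2
mapping simple reflections to simple reflections). -/
structure StarInv (cs : CoxeterSystem M W) where
  star : W →* W
  invol : ∀ w : W, star (star w) = w
  star_simple : ∀ i : B, ∃ j : B, star (cs.simple i) = cs.simple j

variable {cs : CoxeterSystem M W}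

/-- The set `I_* = {w ∈ W : w* = w⁻¹}` of twisted involutions. -/
def StarInv.I (σ : StarInv cs) : Set W := {w : W | σ.star w = w⁻¹}

lemma StarInv.one_mem (σ : StarInv cs) : (1 : W) ∈ σ.I := by
  simp [StarInv.I]

lemma StarInv.star_mul_self (σ : StarInv cs) (i : B) :
    σ.star (cs.simple i) * σ.star (cs.simple i) = 1 := by
  rw [← map_mul, cs.simple_mul_simple_self, map_one]

lemma StarInv.star_simple_inv (σ : StarInv cs) (i : B) :
    (σ.star (cs.simple i))⁻¹ = σ.star (cs.simple i) :=
  inv_eq_of_mul_eq_one_right (σ.star_mul_self i)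

/-- Conjugation `w ↦ s w s*` preserves `I_*`. -/
lemma StarInv.conj_mem (σ : StarInv cs) (i : B) {w : W} (hw : w ∈ σ.I) :
    cs.simple i * w * σ.star (cs.simple i) ∈ σ.I := by
  have hw' : σ.star w = w⁻¹ := hw
  show σ.star _ = _
  rw [map_mul, map_mul, σ.invol, hw', mul_inv_rev, mul_inv_rev,
    σ.star_simple_inv, cs.inv_simple, mul_assoc]

/-- The twisting operation `s ⋉ w` on twisted involutions. -/
def StarInv.tw (σ : StarInv cs) (s w : W) : W :=
  if s * w = w * σ.star s then s * w else s * w * σ.star s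

/-- `s ⋉ w ∈ I_*` whenever `w ∈ I_*`. -/
lemma StarInv.tw_mem (σ : StarInv cs) (i : B) {w : W} (hw : w ∈ σ.I) :
    σ.tw (cs.simple i) w ∈ σ.I := by
  have hw' : σ.star w = w⁻¹ := hw
  unfold StarInv.tw
  split_ifs with h
  · show σ.star _ = _
    rw [map_mul, hw', mul_inv_rev, cs.inv_simple]
    have h2 : σ.star (cs.simple i) = w⁻¹ * (cs.simple i * w) := by
      rw [h]; group
    rw [h2]; group
  · exact σ.conj_mem i hw

/-- Iterated twisting along a word. -/
def twistWord (cs : CoxeterSystem M W) (σ : StarInv cs) (ω : List B) (w : W) : W :=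
  ω.foldr (fun i x => σ.tw (cs.simple i) x) w

lemma twistWord_mem (σ : StarInv cs) (ω : List B) {w : W} (hw : w ∈ σ.I) :
    twistWord cs σ ω w ∈ σ.I := by
  induction ω with
  | nil => exact hw
  | cons i ω ih => exact σ.tw_mem i ih

/-- In a universal Coxeter system the twisting operation extends to an action of `W`; here we
realize `x ⋉ w` by twisting along a (the) reduced word of `x`. -/
def twAct (cs : CoxeterSystem M W) (σ : StarInv cs) (x w : W) : W :=
  twistWord cs σ (Classical.choose (cs.exists_reduced_word' x)) w

lemma twAct_mem (σ : StarInv cs) (x : W) {w : W} (hw : w ∈ σ.I) :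
    twAct cs σ x w ∈ σ.I :=
  twistWord_mem σ _ hw

lemma StarInv.mul_star_inv_mem (σ : StarInv cs) (u : W) : u * (σ.star u)⁻¹ ∈ σ.I := by
  show σ.star _ = _
  rw [map_mul, map_inv, σ.invol, mul_inv_rev, inv_inv]

lemma StarInv.star_mul_inv_mem (σ : StarInv cs) (y : W) : σ.star y * y⁻¹ ∈ σ.I := by
  show σ.star _ = _
  rw [map_mul, map_inv, σ.invol, mul_inv_rev, inv_inv]

lemma StarInv.simple_mem_I (σ : StarInv cs) (i : B) (h : σ.star (cs.simple i) = cs.simple i) :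
    cs.simple i ∈ σ.I := by
  show σ.star _ = _
  rw [h, cs.inv_simple]

/-- The set of left descents of `w`, as a subset of the simple reflections. -/
def DesL (cs : CoxeterSystem M W) (w : W) : Set W :=
  {t : W | (∃ i : B, t = cs.simple i) ∧ cs.length (t * w) < cs.length w}

/-- The set of right descents of `w`, as a subset of the simple reflections. -/
def DesR (cs : CoxeterSystem M W) (w : W) : Set W :=
  {t : W | (∃ i : B, t = cs.simple i) ∧ cs.length (w * t) < cs.length w}

/-- The alternating word `⋯ r s r s` of length `n` ending with `s`. -/
def altEnd (s r : B) : ℕ → List B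
  | 0 => []
  | n + 1 => altEnd r s n ++ [s]

/-- The alternating word `s r s r ⋯` of length `n` starting with `s`. -/
def altStart (s r : B) : ℕ → List B
  | 0 => []
  | n + 1 => s :: altStart r s n

/-- A word is a reduced `I_*`-expression (for the element `twistWord cs σ ω 1`) if it has
minimal length among all words twisting `1` to that element. -/
def IsTwistReduced (cs : CoxeterSystem M W) (σ : StarInv cs) (ω : List B) : Prop :=
  ∀ ω' : List B, twistWord cs σ ω' 1 = twistWord cs σ ω 1 → ω.length ≤ ω'.length

/-- The map `v ↦ v²` on `ℤ[v,v⁻¹]`. -/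
def sub2 : A𝕃 →+* A𝕃 :=
  AddMonoidAlgebra.mapDomainRingHom ℤ (AddMonoidHom.mk' (fun n : ℤ => 2 * n) (by intros; ring))

/-- The generic Hecke algebra of `(W,S)` with parameter `u`: a free `𝒜`-module with basis
`(t_w)` indexed by `W`, satisfying the quadratic multiplication rule. -/
structure Hecke (cs : CoxeterSystem M W) (u : A𝕃) where
  carrier : Type
  [ring : Ring carrier]
  [alg : Algebra A𝕃 carrier]
  t : Module.Basis W A𝕃 carrier
  t_one : t 1 = 1
  t_mul_up : ∀ (i : B) (w : W), cs.length (cs.simple i * w) = cs.length w + 1 →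
      t (cs.simple i) * t w = t (cs.simple i * w)
  t_mul_down : ∀ (i : B) (w : W), cs.length (cs.simple i * w) + 1 = cs.length w →
      t (cs.simple i) * t w = u • t (cs.simple i * w) + (u - 1) • t w

attribute [instance] Hecke.ring Hecke.alg

/-- A Hecke algebra together with its bar involution. -/
structure HeckeBar (cs : CoxeterSystem M W) (u : A𝕃) extends Hecke cs u where
  bar : carrier →+* carrier
  bar_invol : ∀ h : carrier, bar (bar h) = h
  bar_T : ∀ n : ℤ, bar (algebraMap A𝕃 carrier (LaurentPolynomial.T n)) =
      algebraMap A𝕃 carrier (LaurentPolynomial.T (-n))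
  bar_t_mul : ∀ w : W, bar (t w) * t w⁻¹ = 1
  t_mul_bar : ∀ w : W, t w⁻¹ * bar (t w) = 1

/-- The Hecke algebra `ℋ_q` with parameter `q`, together with its Kazhdan–Lusztig
polynomials and Kazhdan–Lusztig basis. -/
structure KLData (cs : CoxeterSystem M W) extends HeckeBar cs qq where
  P : W → W → Polynomial ℤ
  P_diag : ∀ w : W, P w w = 1
  P_zero : ∀ y w : W, ¬ BruhatLT cs y w → y ≠ w → P y w = 0
  P_deg : ∀ y w : W, BruhatLT cs y w →
      2 * (P y w).natDegree + 1 ≤ cs.length w - cs.length y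
  c : Module.Basis W A𝕃 carrier
  c_repr : ∀ w y : W, t.repr (c w) y =
      LaurentPolynomial.T (-(cs.length w : ℤ)) * Polynomial.aeval qq (P y w)
  c_bar : ∀ w : W, bar (c w) = c w

/-- Structure constants `h_{x,y;z}` of `ℋ_q` in the Kazhdan–Lusztig basis. -/
def KLData.h (K : KLData cs) (x y z : W) : A𝕃 := K.c.repr (K.c x * K.c y) z

/-- Structure constants `h̃_{x,y;z}` defined by `c_x c_y c_{(x*)⁻¹} = Σ_z h̃_{x,y;z} c_z`. -/
def KLData.htilde (K : KLData cs) (σ : StarInv cs) (x y z : W) : A𝕃 :=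
  K.c.repr (K.c x * K.c y * K.c ((σ.star x)⁻¹)) z

/-- The Kazhdan–Lusztig basis `C_w` of the Hecke algebra `ℋ_{q²}` with parameter `q²`. -/
structure C2Data (cs : CoxeterSystem M W) (K : HeckeBar cs (qq ^ 2))
    (P : W → W → Polynomial ℤ) where
  C : Module.Basis W A𝕃 K.carrier
  C_repr : ∀ w y : W, K.t.repr (C w) y =
      LaurentPolynomial.T (-(2 * cs.length w : ℤ)) * Polynomial.aeval (qq ^ 2) (P y w)
  C_bar : ∀ w : W, K.bar (C w) = C w

/-- The Lusztig–Vogan module `M_{q²}` of the Hecke algebra `ℋ_{q²}`, spanned by the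
twisted involutions, with its defining `T_s`-action. -/
structure LVMod (cs : CoxeterSystem M W) (σ : StarInv cs) (K : Hecke cs (qq ^ 2)) where
  Mod : Type
  [addCommGroup : AddCommGroup Mod]
  [modA : Module A𝕃 Mod]
  [modH : Module K.carrier Mod]
  [tower : IsScalarTower A𝕃 K.carrier Mod]
  a : Module.Basis σ.I A𝕃 Mod
  smul₁ : ∀ (i : B) (w u : σ.I),
    (u : W) = cs.simple i * (w : W) * σ.star (cs.simple i) →
    cs.simple i * (w : W) ≠ (w : W) * σ.star (cs.simple i) →
    cs.length (cs.simple i * (w : W)) = cs.length (w : W) + 1 →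
    K.t (cs.simple i) • a w = a u
  smul₂ : ∀ (i : B) (w u : σ.I),
    (u : W) = cs.simple i * (w : W) →
    cs.simple i * (w : W) = (w : W) * σ.star (cs.simple i) →
    cs.length (cs.simple i * (w : W)) = cs.length (w : W) + 1 →
    K.t (cs.simple i) • a w = (qq + 1) • a u + qq • a w
  smul₃ : ∀ (i : B) (w u : σ.I),
    (u : W) = cs.simple i * (w : W) →
    cs.simple i * (w : W) = (w : W) * σ.star (cs.simple i) →
    cs.length (cs.simple i * (w : W)) + 1 = cs.length (w : W) →
    K.t (cs.simple i) • a w = (qq ^ 2 - qq) • a u + (qq ^ 2 - qq - 1) • a w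
  smul₄ : ∀ (i : B) (w u : σ.I),
    (u : W) = cs.simple i * (w : W) * σ.star (cs.simple i) →
    cs.simple i * (w : W) ≠ (w : W) * σ.star (cs.simple i) →
    cs.length (cs.simple i * (w : W)) + 1 = cs.length (w : W) →
    K.t (cs.simple i) • a w = (qq ^ 2) • a u + (qq ^ 2 - 1) • a w

attribute [instance] LVMod.addCommGroup LVMod.modA LVMod.modH LVMod.tower

/-- The Lusztig–Vogan module together with its bar operator, the twisted Kazhdan–Lusztig
polynomials `P^σ_{y,w}` and the twisted Kazhdan–Lusztig basis `A_w`. -/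
structure TKLData (cs : CoxeterSystem M W) (σ : StarInv cs) (K : HeckeBar cs (qq ^ 2))
    extends LVMod cs σ K.toHecke where
  barM : Mod →+ Mod
  barM_invol : ∀ m : Mod, barM (barM m) = m
  barM_one : barM (a ⟨1, σ.one_mem⟩) = a ⟨1, σ.one_mem⟩
  barM_smul : ∀ (h : K.carrier) (m : Mod), barM (h • m) = K.bar h • barM m
  Pσ : W → W → Polynomial ℤ
  Pσ_diag : ∀ w : σ.I, Pσ (w : W) (w : W) = 1
  Pσ_zero : ∀ y w : σ.I, ¬ BruhatLT cs (y : W) (w : W) → (y : W) ≠ (w : W) →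
      Pσ (y : W) (w : W) = 0
  Pσ_deg : ∀ y w : σ.I, BruhatLT cs (y : W) (w : W) →
      2 * (Pσ (y : W) (w : W)).natDegree + 1 ≤ cs.length (w : W) - cs.length (y : W)
  A : Module.Basis σ.I A𝕃 Mod
  A_repr : ∀ w y : σ.I, a.repr (A w) y =
      LaurentPolynomial.T (-(cs.length (w : W) : ℤ)) * Polynomial.aeval qq (Pσ (y : W) (w : W))
  A_bar : ∀ w : σ.I, barM (A w) = A w

/-- Structure constants `h^σ_{x,y;z}` defined by `C_x A_y = Σ_z h^σ_{x,y;z} A_z`. -/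
def TKLData.hσ {σ : StarInv cs} {K : HeckeBar cs (qq ^ 2)} (D : TKLData cs σ K)
    {P : W → W → Polynomial ℤ} (C2 : C2Data cs K P) (x : W) (y z : σ.I) : A𝕃 :=
  D.A.repr (C2.C x • D.A y) z

/-- The coefficient of `v^m` in `p(v²)`, for a polynomial `p ∈ ℤ[q]`. -/
def coeffV (p : Polynomial ℤ) (m : ℤ) : ℤ :=
  if 0 ≤ m ∧ m % 2 = 0 then p.coeff (m / 2).toNat else 0

/-- `μ^σ(y,w)`: the coefficient of `v^{ℓ(w)-ℓ(y)-1}` in `P^σ_{y,w}`. -/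
def TKLData.μ {σ : StarInv cs} {K : HeckeBar cs (qq ^ 2)} (D : TKLData cs σ K)
    (y w : W) : ℤ :=
  coeffV (D.Pσ y w) ((cs.length w : ℤ) - cs.length y - 1)

/-- `ν^σ(y,w)`: the coefficient of `v^{ℓ(w)-ℓ(y)-2}` in `P^σ_{y,w}`. -/
def TKLData.ν {σ : StarInv cs} {K : HeckeBar cs (qq ^ 2)} (D : TKLData cs σ K)
    (y w : W) : ℤ :=
  coeffV (D.Pσ y w) ((cs.length w : ℤ) - cs.length y - 2)

/-- `μ^σ(y,w;s)`. -/
def TKLData.μs {σ : StarInv cs} {K : HeckeBar cs (qq ^ 2)} (D : TKLData cs σ K)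
    (y w : W) (i : B) : ℤ :=
  D.ν y w
    + (if cs.simple i * y = y * σ.star (cs.simple i) then D.μ (cs.simple i * y) w else 0)
    - (if cs.simple i * w = w * σ.star (cs.simple i) then D.μ y (cs.simple i * w) else 0)
    - ∑ᶠ (x : W) (_ : x ∈ σ.I ∧ cs.length (cs.simple i * x) < cs.length x),
        D.μ y x * D.μ x w

/-- `m^σ(y →_s w)`. -/
def TKLData.mσ {σ : StarInv cs} {K : HeckeBar cs (qq ^ 2)} (D : TKLData cs σ K)
    (y w : W) (i : B) : A𝕃 :=
  if ((cs.length w : ℤ) - cs.length y) % 2 = 1 then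
    (D.μ y w : ℤ) • (LaurentPolynomial.T 1 + LaurentPolynomial.T (-1))
  else ((D.μs y w i : ℤ) : A𝕃)

end TwistedKL

/-!
When `ℓ(w) − ℓ(y)` is odd, every term of `μ^σ(y,w;s)` reads a coefficient of some `P^σ`
at an odd power of `v` (for the products, one of the two factors does), and these vanish
because `P^σ` is a polynomial in `q = v²`.

Each term is also nonzero only if `y` lies Bruhat-below `s ⋉ w` with a length drop:
`y < w < s ⋉ w` for `ν` and for the sum, `y < s w = s ⋉ w` for the third term, and for the
second, the lifting property applied to `s y < w` gives `y ≤ w` or `y ≤ s w ≤ s ⋉ w`. Since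
`BruhatLE` is the subword order, transitivity and lifting need its identification with the
chain order generated by `u < t u`; this is the subword property, which rests on the strong
exchange condition, proved with Tits' action of `W` on `W × {±1}`.
-/

namespace CoxeterSystem

variable {B W : Type*} [Group W] {M : CoxeterMatrix B} (cs : CoxeterSystem M W)

theorem prod_map_alternatingWord_two_mul {G : Type*} [Monoid G] (f : B → G) (i i' : B)
    (m : ℕ) : ((alternatingWord i i' (2 * m)).map f).prod = (f i * f i') ^ m := by
  induction m with
  | zero => simp [alternatingWord]
  | succ m ih =>
    rw [show 2 * (m + 1) = 2 * m + 1 + 1 by ring, alternatingWord_succ', alternatingWord_succ',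
      if_neg (by simp [parity_simps]), if_pos (by simp [parity_simps])]
    simp only [List.map_cons, List.prod_cons, ih, pow_succ', mul_assoc]

theorem reverse_alternatingWord_two_mul (i i' : B) (p : ℕ) :
    (alternatingWord i i' (2 * p)).reverse = alternatingWord i' i (2 * p) := by
  induction p generalizing i i' with
  | zero => rfl
  | succ p ih =>
    rw [show 2 * (p + 1) = 2 * p + 1 + 1 by ring, alternatingWord_succ', alternatingWord_succ,
      alternatingWord_succ', alternatingWord_succ, if_neg (by simp [parity_simps]),
      if_neg (by simp [parity_simps])]
    simp [ih]

theorem even_count_rightInvSeq_alternatingWord (i i' : B) (a : W) :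
    Even ((cs.rightInvSeq (alternatingWord i i' (2 * M i i'))).count a) := by
  set m := M i i'
  rw [← reverse_alternatingWord_two_mul, rightInvSeq_reverse, List.count_reverse]
  set L := cs.leftInvSeq (alternatingWord i' i (2 * m))
  have hL : L.length = 2 * m := by simp [L]
  -- the `k`-th entry is `sᵢ' (sᵢ sᵢ')ᵏ`, so the sequence has period `m`
  have hperiod : L.drop m = L.take m := by
    refine List.ext_getElem (by simp [hL]; omega) fun k h₁ h₂ => ?_
    simp only [List.getElem_drop, List.getElem_take, L]
    rw [getElem_leftInvSeq_alternatingWord cs i' i m (m + k) (by simp [hL] at h₁; omega),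
      getElem_leftInvSeq_alternatingWord cs i' i m k (by simp [hL] at h₂; omega),
      prod_alternatingWord_eq_mul_pow, prod_alternatingWord_eq_mul_pow,
      show (2 * (m + k) + 1) / 2 = m + k by omega, show (2 * k + 1) / 2 = k by omega, pow_add,
      show (cs.simple i * cs.simple i') ^ m = 1 from cs.simple_mul_simple_pow i i', one_mul]
    simp [parity_simps]
  rw [← List.take_append_drop m L, List.count_append, hperiod]
  exact ⟨_, rfl⟩

def signFlip (i : B) : Equiv.Perm (W × ℤˣ) :=
  Function.Involutive.toPerm
    (fun p => (cs.simple i * p.1 * cs.simple i, if p.1 = cs.simple i then -p.2 else p.2))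
    (by
      rintro ⟨a, ε⟩
      by_cases ha : a = cs.simple i
      · simp [ha]
      · have : a * cs.simple i ≠ 1 := fun h => ha (by simpa using eq_inv_of_mul_eq_one_left h)
        simp [ha, this, mul_assoc])

theorem signFlip_apply (i : B) (p : W × ℤˣ) :
    cs.signFlip i p =
      (cs.simple i * p.1 * cs.simple i, if p.1 = cs.simple i then -p.2 else p.2) :=
  rfl

theorem prod_map_signFlip_apply (ω : List B) (p : W × ℤˣ) :
    (ω.map cs.signFlip).prod p =
      (cs.wordProd ω * p.1 * (cs.wordProd ω)⁻¹, (-1) ^ (cs.rightInvSeq ω).count p.1 * p.2) := by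
  induction ω with
  | nil => simp
  | cons j ω ih =>
    have hiff : cs.wordProd ω * p.1 * (cs.wordProd ω)⁻¹ = cs.simple j ↔
        (cs.wordProd ω)⁻¹ * cs.simple j * cs.wordProd ω = p.1 := by
      constructor <;> intro h <;> rw [← h] <;> group
    simp only [List.map_cons, List.prod_cons, Equiv.Perm.mul_apply, ih, signFlip_apply, hiff,
      rightInvSeq, List.count_cons, beq_iff_eq, wordProd_cons, mul_inv_rev, inv_simple,
      Prod.mk.injEq]
    refine ⟨by group, ?_⟩
    split_ifs <;> simp [pow_succ]

theorem isLiftable_signFlip : M.IsLiftable cs.signFlip := by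
  intro i i'
  rw [← prod_map_alternatingWord_two_mul]
  ext1 p
  obtain ⟨c, hc⟩ := cs.even_count_rightInvSeq_alternatingWord i i' p.1
  have hπ : cs.wordProd (alternatingWord i i' (2 * M i i')) = 1 := by
    rw [prod_alternatingWord_eq_mul_pow, if_pos (by simp), Nat.mul_div_cancel_left _ two_pos,
      simple_mul_simple_pow, one_mul]
  rw [prod_map_signFlip_apply, hπ, hc, ← two_mul, pow_mul]
  simp

def signRep : W →* Equiv.Perm (W × ℤˣ) := cs.lift ⟨cs.signFlip, cs.isLiftable_signFlip⟩

theorem signRep_simple (i : B) : cs.signRep (cs.simple i) = cs.signFlip i :=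
  cs.lift_apply_simple cs.isLiftable_signFlip i

theorem signRep_wordProd_apply (ω : List B) (p : W × ℤˣ) :
    cs.signRep (cs.wordProd ω) p =
      (cs.wordProd ω * p.1 * (cs.wordProd ω)⁻¹, (-1) ^ (cs.rightInvSeq ω).count p.1 * p.2) := by
  have : cs.signRep (cs.wordProd ω) = (ω.map cs.signFlip).prod := by
    induction ω with
    | nil => simp
    | cons j ω ih =>
      rw [wordProd_cons, map_mul, ih, signRep_simple, List.map_cons, List.prod_cons]
  rw [this, prod_map_signFlip_apply]

theorem exists_signRep_apply (g a : W) :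
    ∃ η : ℤˣ, ∀ ε : ℤˣ, cs.signRep g (a, ε) = (g * a * g⁻¹, η * ε) := by
  obtain ⟨ω, -, rfl⟩ := cs.exists_isReduced g
  exact ⟨(-1) ^ (cs.rightInvSeq ω).count a, fun ε => cs.signRep_wordProd_apply ω (a, ε)⟩

theorem signRep_apply_self {t : W} (ht : cs.IsReflection t) (ε : ℤˣ) :
    cs.signRep t (t, ε) = (t, -ε) := by
  obtain ⟨x, j, rfl⟩ := ht
  obtain ⟨η, hη⟩ := cs.exists_signRep_apply x⁻¹ (x * cs.simple j * x⁻¹)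
  have hconj : x⁻¹ * (x * cs.simple j * x⁻¹) * x⁻¹⁻¹ = cs.simple j := by group
  simp only [hconj] at hη
  have hback : cs.signRep x (cs.simple j, η * -ε) = (x * cs.simple j * x⁻¹, -ε) := by
    rw [← hη, ← Equiv.Perm.mul_apply, ← map_mul, mul_inv_cancel, map_one, Equiv.Perm.one_apply]
  have hsimple : cs.signRep (cs.simple j) (cs.simple j, η * ε) = (cs.simple j, η * -ε) := by
    simp [signRep_simple, signFlip_apply]
  rw [show x * cs.simple j * x⁻¹ = x * (cs.simple j * x⁻¹) from mul_assoc _ _ _, map_mul,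
    map_mul, Equiv.Perm.mul_apply, Equiv.Perm.mul_apply, ← mul_assoc, hη, hsimple, hback]

/-- The strong exchange condition. -/
theorem mem_rightInvSeq_of_isRightInversion (ω : List B) {t : W}
    (ht : cs.IsRightInversion (cs.wordProd ω) t) : t ∈ cs.rightInvSeq ω := by
  by_contra hmem
  -- otherwise `π ω * t` flips the sign of `(t, 1)`, so `t` occurs in the right inversion
  -- sequence of a reduced word for `π ω * t`, making it a right descent there
  obtain ⟨χ, hχ, hπχ⟩ := cs.exists_isReduced (cs.wordProd ω * t)
  have hsign := congrArg Prod.snd <| calc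
    cs.signRep (cs.wordProd χ) (t, 1) = cs.signRep (cs.wordProd ω) (cs.signRep t (t, 1)) := by
      rw [← hπχ, map_mul, Equiv.Perm.mul_apply]
    _ = _ := by rw [signRep_apply_self cs ht.1, signRep_wordProd_apply]
  simp only [signRep_wordProd_apply, List.count_eq_zero.mpr hmem, pow_zero, one_mul,
    mul_one] at hsign
  have hmemχ : t ∈ cs.rightInvSeq χ := by
    by_contra h
    simp [List.count_eq_zero.mpr h] at hsign
  have hlt := (cs.isRightInversion_of_mem_rightInvSeq hχ hmemχ).2
  rw [← hπχ, mul_assoc, ht.1.mul_self, mul_one] at hlt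
  exact lt_asymm hlt ht.2

theorem mem_leftInvSeq_of_isLeftInversion (ω : List B) {t : W}
    (ht : cs.IsLeftInversion (cs.wordProd ω) t) : t ∈ cs.leftInvSeq ω := by
  have := cs.mem_rightInvSeq_of_isRightInversion ω.reverse (by
    rwa [wordProd_reverse, isRightInversion_inv_iff])
  rwa [rightInvSeq_reverse, List.mem_reverse] at this

theorem exists_eraseIdx_of_isLeftInversion (ω : List B) {t : W}
    (ht : cs.IsLeftInversion (cs.wordProd ω) t) :
    ∃ j < ω.length, t * cs.wordProd ω = cs.wordProd (ω.eraseIdx j) := by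
  obtain ⟨j, hj, rfl⟩ := List.getElem_of_mem (cs.mem_leftInvSeq_of_isLeftInversion ω ht)
  refine ⟨j, by simpa using hj, ?_⟩
  rw [← List.getD_eq_getElem _ 1 hj, getD_leftInvSeq_mul_wordProd]

theorem exists_isReduced_sublist (ω : List B) :
    ∃ γ : List B, γ.Sublist ω ∧ cs.IsReduced γ ∧ cs.wordProd γ = cs.wordProd ω := by
  induction ω with
  | nil => exact ⟨[], .slnil, by simp [IsReduced], rfl⟩
  | cons i ω ih =>
    obtain ⟨γ, hsub, hγ, hprod⟩ := ih
    rcases cs.length_simple_mul (cs.wordProd γ) i with hup | hdown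
    · refine ⟨i :: γ, hsub.cons_cons i, ?_, by rw [wordProd_cons, wordProd_cons, hprod]⟩
      rw [IsReduced, wordProd_cons, hup, hγ, List.length_cons]
    · obtain ⟨j, hj, herase⟩ := cs.exists_eraseIdx_of_isLeftInversion γ
        ⟨cs.isReflection_simple i, by omega⟩
      refine ⟨γ.eraseIdx j, ((γ.eraseIdx_sublist j).trans hsub).cons i, ?_, ?_⟩
      · rw [IsReduced, ← herase, List.length_eraseIdx_of_lt hj]
        have := hγ.eq
        omega
      · rw [← herase, wordProd_cons, hprod]

theorem eq_mul_simple_of_isLeftInversion {u t : W} {i : B}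
    (hu : cs.length u < cs.length (u * cs.simple i)) (htu : cs.length u < cs.length (t * u))
    (ht : cs.IsLeftInversion (u * cs.simple i) t) : t * u = u * cs.simple i := by
  obtain ⟨ω, hω, rfl⟩ := cs.exists_isReduced u
  have hωi : cs.IsReduced (ω.concat i) := by
    have := cs.length_mul_simple (cs.wordProd ω) i
    rw [IsReduced, wordProd_concat, List.length_concat, ← hω.eq]
    omega
  have hmem := cs.mem_leftInvSeq_of_isLeftInversion (ω.concat i) (by rwa [wordProd_concat])
  rw [leftInvSeq_concat, List.concat_eq_append, List.mem_append, List.mem_singleton] at hmem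
  rcases hmem with hmem | rfl
  · exact absurd (cs.isLeftInversion_of_mem_leftInvSeq hω hmem).2 (not_lt.mpr htu.le)
  · group

end CoxeterSystem

namespace TwistedKL

variable {B W : Type} [Group W] {M : CoxeterMatrix B} {cs : CoxeterSystem M W}

def BruhatStep (cs : CoxeterSystem M W) (u v : W) : Prop :=
  ∃ t : W, cs.IsReflection t ∧ v = t * u ∧ cs.length u < cs.length v

abbrev BruhatChain (cs : CoxeterSystem M W) : W → W → Prop :=
  Relation.ReflTransGen (BruhatStep cs)

theorem BruhatChain.length_le {u v : W} (h : BruhatChain cs u v) :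
    cs.length u ≤ cs.length v := by
  induction h with
  | refl => rfl
  | tail _ hstep ih => obtain ⟨_, _, _, hlt⟩ := hstep; omega

theorem BruhatChain.eq_or_length_lt {u v : W} (h : BruhatChain cs u v) :
    u = v ∨ cs.length u < cs.length v := by
  induction h with
  | refl => exact .inl rfl
  | tail hc hstep _ =>
    obtain ⟨_, _, _, hlt⟩ := hstep
    exact .inr ((BruhatChain.length_le hc).trans_lt hlt)

theorem BruhatChain.inv {u v : W} (h : BruhatChain cs u v) : BruhatChain cs u⁻¹ v⁻¹ := by
  induction h with
  | refl => exact .refl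
  | @tail b c _ hstep ih =>
    obtain ⟨t, ht, rfl, hlt⟩ := hstep
    refine ih.tail ⟨b⁻¹ * t * b, by simpa using ht.conj b⁻¹, ?_, ?_⟩
    · rw [mul_inv_rev, ht.inv]
      group
    · rwa [cs.length_inv, cs.length_inv]

theorem bruhatStep_simple_mul {w : W} {i : B} (h : cs.length w < cs.length (cs.simple i * w)) :
    BruhatStep cs w (cs.simple i * w) :=
  ⟨cs.simple i, cs.isReflection_simple i, rfl, h⟩

theorem bruhatStep_mul_simple {w : W} {i : B} (h : cs.length w < cs.length (w * cs.simple i)) :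
    BruhatStep cs w (w * cs.simple i) :=
  ⟨w * cs.simple i * w⁻¹, (cs.isReflection_simple i).conj w, by group, h⟩

theorem BruhatStep.lift_mul_simple {u v : W} (h : BruhatStep cs u v) (i : B) :
    BruhatChain cs (u * cs.simple i) v ∨ BruhatChain cs (u * cs.simple i) (v * cs.simple i) := by
  obtain ⟨t, ht, rfl, hlt⟩ := h
  rcases cs.length_mul_simple u i with hup | hdown
  · by_cases hts : cs.length (u * cs.simple i) < cs.length (t * u * cs.simple i)
    · exact .inr (.single ⟨t, ht, mul_assoc _ _ _, hts⟩)
    · have hne := ht.length_mul_right_ne (u * cs.simple i)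
      rw [← mul_assoc] at hne
      rw [cs.eq_mul_simple_of_isLeftInversion (i := i) (by omega) hlt
        ⟨ht, by rw [← mul_assoc]; omega⟩]
      exact .inl .refl
  · have hdown' : BruhatStep cs (u * cs.simple i) u := by
      simpa using bruhatStep_mul_simple (cs := cs) (w := u * cs.simple i) (i := i) (by simp; omega)
    exact .inl ((Relation.ReflTransGen.single hdown').tail ⟨t, ht, rfl, hlt⟩)

theorem BruhatChain.lift_mul_simple {u v : W} (h : BruhatChain cs u v) (i : B) :
    BruhatChain cs (u * cs.simple i) v ∨ BruhatChain cs (u * cs.simple i) (v * cs.simple i) := by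
  induction h with
  | refl => exact .inr .refl
  | tail _ hstep ih =>
    rcases ih with ih | ih
    · exact .inl (ih.tail hstep)
    · rcases hstep.lift_mul_simple i with h | h
      · exact .inl (ih.trans h)
      · exact .inr (ih.trans h)

theorem BruhatChain.lift_simple_mul {u v : W} (h : BruhatChain cs u v) (i : B) :
    BruhatChain cs (cs.simple i * u) v ∨ BruhatChain cs (cs.simple i * u) (cs.simple i * v) := by
  rcases h.inv.lift_mul_simple i with h' | h'
  · exact .inl (by simpa using h'.inv)
  · exact .inr (by simpa using h'.inv)

theorem bruhatStep_wordProd_cons {a : B} {ω : List B} (h : cs.IsReduced (a :: ω)) :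
    BruhatStep cs (cs.wordProd ω) (cs.wordProd (a :: ω)) := by
  have hω : cs.IsReduced ω := by simpa using h.drop 1
  have := h.eq
  rw [cs.wordProd_cons, List.length_cons, ← hω.eq] at this
  exact cs.wordProd_cons a ω ▸ bruhatStep_simple_mul (by omega)

theorem bruhatChain_of_sublist {χ ω : List B} (h : χ.Sublist ω) (hω : cs.IsReduced ω) :
    BruhatChain cs (cs.wordProd χ) (cs.wordProd ω) := by
  induction h with
  | slnil => exact .refl
  | cons a _ ih => exact (ih (by simpa using hω.drop 1)).tail (bruhatStep_wordProd_cons hω)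
  | cons_cons a _ ih =>
    rcases BruhatChain.lift_simple_mul (ih (by simpa using hω.drop 1)) a with h' | h'
    · exact h'.tail (bruhatStep_wordProd_cons hω)
    · rwa [cs.wordProd_cons, cs.wordProd_cons]

theorem BruhatChain.bruhatLE {y w : W} (h : BruhatChain cs y w) : BruhatLE cs y w := by
  induction h with
  | refl => exact fun ω _ hω => ⟨ω, .refl ω, hω⟩
  | @tail u v _ hstep ih =>
    intro ω hred hω
    obtain ⟨t, ht, rfl, hlt⟩ := hstep
    obtain ⟨j, -, herase⟩ := cs.exists_eraseIdx_of_isLeftInversion ω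
      ⟨ht, by rwa [hω, ← mul_assoc, ht.mul_self, one_mul]⟩
    obtain ⟨γ, hγω, hγ, hπγ⟩ := cs.exists_isReduced_sublist (ω.eraseIdx j)
    obtain ⟨χ, hχγ, rfl⟩ := ih γ hγ
      (by rw [hπγ, ← herase, hω, ← mul_assoc, ht.mul_self, one_mul])
    exact ⟨χ, (hχγ.trans hγω).trans (ω.eraseIdx_sublist j), rfl⟩

theorem bruhatLE_iff_bruhatChain {y w : W} : BruhatLE cs y w ↔ BruhatChain cs y w := by
  refine ⟨fun h => ?_, BruhatChain.bruhatLE⟩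
  obtain ⟨ω, hω, rfl⟩ := cs.exists_isReduced w
  obtain ⟨χ, hχω, rfl⟩ := h ω hω rfl
  exact bruhatChain_of_sublist hχω hω

theorem BruhatLE.trans {x y z : W} (hxy : BruhatLE cs x y) (hyz : BruhatLE cs y z) :
    BruhatLE cs x z := by
  rw [bruhatLE_iff_bruhatChain] at *
  exact Relation.ReflTransGen.trans hxy hyz

theorem BruhatLE.length_le {y w : W} (h : BruhatLE cs y w) : cs.length y ≤ cs.length w :=
  BruhatChain.length_le (bruhatLE_iff_bruhatChain.mp h)

theorem BruhatLT.length_lt {y w : W} (h : BruhatLT cs y w) : cs.length y < cs.length w :=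
  (BruhatChain.eq_or_length_lt (bruhatLE_iff_bruhatChain.mp h.1)).resolve_left h.2

theorem BruhatLE.bruhatLT_of_length_lt {y w : W} (h : BruhatLE cs y w)
    (hlt : cs.length y < cs.length w) : BruhatLT cs y w :=
  ⟨h, by rintro rfl; exact lt_irrefl _ hlt⟩

theorem bruhatLE_simple_mul {w : W} {i : B} (h : cs.length w < cs.length (cs.simple i * w)) :
    BruhatLE cs w (cs.simple i * w) :=
  BruhatChain.bruhatLE (.single (bruhatStep_simple_mul h))

theorem BruhatLE.lift_simple_mul {u v : W} (h : BruhatLE cs u v) (i : B) :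
    BruhatLE cs (cs.simple i * u) v ∨ BruhatLE cs (cs.simple i * u) (cs.simple i * v) := by
  simpa only [bruhatLE_iff_bruhatChain] using
    BruhatChain.lift_simple_mul (bruhatLE_iff_bruhatChain.mp h) i

theorem StarInv.length_star (σ : StarInv cs) (w : W) : cs.length (σ.star w) = cs.length w := by
  have hle : ∀ u : W, cs.length (σ.star u) ≤ cs.length u := by
    have hword : ∀ ω : List B, cs.length (σ.star (cs.wordProd ω)) ≤ ω.length := by
      intro ω
      induction ω with
      | nil => simp
      | cons a ω ih =>
        obtain ⟨j, hj⟩ := σ.star_simple a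
        rw [cs.wordProd_cons, map_mul, hj, List.length_cons]
        have := cs.length_mul_le (cs.simple j) (σ.star (cs.wordProd ω))
        rw [cs.length_simple] at this
        omega
    intro u
    obtain ⟨ω, hω, rfl⟩ := cs.exists_isReduced u
    exact hω.eq ▸ hword ω
  exact le_antisymm (hle w) (by simpa [σ.invol] using hle (σ.star w))

theorem StarInv.length_mul_star_simple (σ : StarInv cs) {w : W} (hw : w ∈ σ.I) (i : B) :
    cs.length (w * σ.star (cs.simple i)) = cs.length (cs.simple i * w) := by
  have hw' : σ.star w = w⁻¹ := hw
  rw [← cs.length_inv, ← σ.length_star (cs.simple i * w), map_mul, hw', mul_inv_rev,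
    σ.star_simple_inv]

theorem StarInv.bruhatLE_simple_mul_tw (σ : StarInv cs) {w : W} (hw : w ∈ σ.I) {i : B}
    (hup : cs.length w < cs.length (cs.simple i * w)) :
    BruhatLE cs (cs.simple i * w) (σ.tw (cs.simple i) w) := by
  unfold StarInv.tw
  split_ifs with hcomm
  · exact bruhatLE_iff_bruhatChain.mpr .refl
  · obtain ⟨j, hj⟩ := σ.star_simple i
    have hright := σ.length_mul_star_simple hw i
    rw [hj] at hright hcomm ⊢
    refine BruhatChain.bruhatLE (.single (bruhatStep_mul_simple ?_))
    -- a length drop from `s w` to `s w s*` would force `s w = w s*`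
    by_contra hdown
    have hne := cs.length_mul_simple_ne (cs.simple i * w) j
    exact hcomm (cs.eq_mul_simple_of_isLeftInversion (by omega) hup
      ⟨cs.isReflection_simple i, by rw [← mul_assoc]; omega⟩)

theorem StarInv.simple_mul_mem (σ : StarInv cs) {w : W} (hw : w ∈ σ.I) {i : B}
    (hcomm : cs.simple i * w = w * σ.star (cs.simple i)) : cs.simple i * w ∈ σ.I := by
  simpa only [StarInv.tw, if_pos hcomm] using σ.tw_mem i hw

theorem coeffV_zero (m : ℤ) : coeffV 0 m = 0 := by
  simp [coeffV]

theorem coeffV_of_neg (p : Polynomial ℤ) {m : ℤ} (hm : m < 0) : coeffV p m = 0 :=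
  if_neg (by omega)

theorem coeffV_of_odd (p : Polynomial ℤ) {m : ℤ} (hm : m % 2 = 1) : coeffV p m = 0 :=
  if_neg (by omega)

section TKLData

variable {σ : StarInv cs} {K : HeckeBar cs (qq ^ 2)} (D : TKLData cs σ K)

theorem TKLData.bruhatLT_of_coeffV_ne_zero {y w : W} (hy : y ∈ σ.I) (hw : w ∈ σ.I) {m : ℤ}
    (hm : m < (cs.length w : ℤ) - cs.length y) (h : coeffV (D.Pσ y w) m ≠ 0) :
    BruhatLT cs y w := by
  by_contra hlt
  by_cases hyw : y = w
  · subst hyw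
    exact h (by rw [D.Pσ_diag ⟨y, hy⟩]; exact coeffV_of_neg _ (by omega))
  · exact h (by rw [D.Pσ_zero ⟨y, hy⟩ ⟨w, hw⟩ hlt hyw, coeffV_zero])

theorem TKLData.bruhatLT_of_μ_ne_zero {y w : W} (hy : y ∈ σ.I) (hw : w ∈ σ.I)
    (h : D.μ y w ≠ 0) : BruhatLT cs y w :=
  D.bruhatLT_of_coeffV_ne_zero hy hw (by omega) h

theorem TKLData.bruhatLT_of_ν_ne_zero {y w : W} (hy : y ∈ σ.I) (hw : w ∈ σ.I)
    (h : D.ν y w ≠ 0) : BruhatLT cs y w :=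
  D.bruhatLT_of_coeffV_ne_zero hy hw (by omega) h

theorem TKLData.μs_eq_zero {y w : W} {i : B} (hν : D.ν y w = 0)
    (hμy : cs.simple i * y = y * σ.star (cs.simple i) → D.μ (cs.simple i * y) w = 0)
    (hμw : cs.simple i * w = w * σ.star (cs.simple i) → D.μ y (cs.simple i * w) = 0)
    (hsum : ∀ x ∈ σ.I, cs.length (cs.simple i * x) < cs.length x → D.μ y x * D.μ x w = 0) :
    D.μs y w i = 0 := by
  have hfinsum : ∑ᶠ (x : W) (_ : x ∈ σ.I ∧ cs.length (cs.simple i * x) < cs.length x),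
      D.μ y x * D.μ x w = 0 :=
    finsum_mem_eq_zero_of_forall_eq_zero (s := {x | x ∈ σ.I ∧ _}) fun x hx => hsum x hx.1 hx.2
  rw [TKLData.μs, hν, hfinsum, ite_eq_right_iff.mpr hμy, ite_eq_right_iff.mpr hμw]
  ring

theorem TKLData.μs_eq_zero_of_odd {y w : W} (i : B)
    (hodd : ((cs.length w : ℤ) - cs.length y) % 2 = 1) : D.μs y w i = 0 := by
  refine D.μs_eq_zero (coeffV_of_odd _ (by omega)) (fun _ => ?_) (fun _ => ?_) fun x _ _ => ?_
  · rcases cs.length_simple_mul y i with h | h <;> exact coeffV_of_odd _ (by omega)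
  · rcases cs.length_simple_mul w i with h | h <;> exact coeffV_of_odd _ (by omega)
  · rcases Int.emod_two_eq_zero_or_one ((cs.length x : ℤ) - cs.length y - 1) with h | h
    · have hxw : D.μ x w = 0 := coeffV_of_odd _ (by omega)
      rw [hxw, mul_zero]
    · have hyx : D.μ y x = 0 := coeffV_of_odd _ h
      rw [hyx, zero_mul]

theorem TKLData.μs_eq_zero_of_not_bruhatLT {y w : W} (hy : y ∈ σ.I) (hw : w ∈ σ.I) {i : B}
    (hup : ¬ cs.length (cs.simple i * w) < cs.length w)
    (hlt : ¬ BruhatLT cs y (σ.tw (cs.simple i) w)) : D.μs y w i = 0 := by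
  have hup' : cs.length w < cs.length (cs.simple i * w) := by
    have := cs.length_simple_mul_ne w i
    omega
  have hswv := σ.bruhatLE_simple_mul_tw hw hup'
  have hwv := (bruhatLE_simple_mul hup').trans hswv
  have hlen : cs.length w < cs.length (σ.tw (cs.simple i) w) := hup'.trans_le hswv.length_le
  have hbelow : ∀ x, BruhatLE cs y x → BruhatLE cs x (σ.tw (cs.simple i) w) →
      cs.length y < cs.length (σ.tw (cs.simple i) w) → False :=
    fun x hyx hxv hl => hlt ((hyx.trans hxv).bruhatLT_of_length_lt hl)
  refine D.μs_eq_zero ?_ (fun hcomm => ?_) (fun hcomm => ?_) fun x hx _ => ?_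
  · by_contra hν
    have hyw := D.bruhatLT_of_ν_ne_zero hy hw hν
    exact hbelow w hyw.1 hwv (hyw.length_lt.trans hlen)
  · by_contra hμ
    have hsyw := D.bruhatLT_of_μ_ne_zero (σ.simple_mul_mem hy hcomm) hw hμ
    have hl : cs.length y < cs.length (σ.tw (cs.simple i) w) := by
      have := cs.length_simple_mul y i
      have := hsyw.length_lt
      omega
    rcases hsyw.1.lift_simple_mul i with h | h <;> rw [cs.simple_mul_simple_cancel_left] at h
    · exact hbelow w h hwv hl
    · exact hbelow _ h hswv hl
  · by_contra hμ
    apply hlt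
    rw [StarInv.tw, if_pos hcomm]
    exact D.bruhatLT_of_μ_ne_zero hy (σ.simple_mul_mem hw hcomm) hμ
  · by_contra hprod
    obtain ⟨hyx, hxw⟩ := mul_ne_zero_iff.mp hprod
    have hyx := D.bruhatLT_of_μ_ne_zero hy hx hyx
    have hxw := D.bruhatLT_of_μ_ne_zero hx hw hxw
    exact hbelow x hyx.1 (hxw.1.trans hwv) (hyx.length_lt.trans (hxw.length_lt.trans hlen))

end TKLData

end TwistedKL

namespace TwistedKL

variable {B : Type} {W : Type} [Group W] {M : CoxeterMatrix B}

theorem statement_0_general (cs : CoxeterSystem M W) (σ : StarInv cs) (K : HeckeBar cs (qq ^ 2))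
    (D : TKLData cs σ K) (y w : σ.I) (i : B)
    (hw : ¬ cs.length (cs.simple i * (w : W)) < cs.length (w : W))
    (hne : D.μs (y : W) (w : W) i ≠ 0) :
    ((cs.length (w : W) : ℤ) - cs.length (y : W)) % 2 = 0 ∧
      BruhatLT cs (y : W) (σ.tw (cs.simple i) (w : W)) := by
  refine ⟨?_, ?_⟩
  · by_contra hodd
    exact hne (D.μs_eq_zero_of_odd i (by omega))
  · by_contra hlt
    exact hne (D.μs_eq_zero_of_not_bruhatLT y.2 w.2 hw hlt)

/-- If `y,w ∈ I_*` and `s ∈ Des_L(y) \ Des_L(w)`, then `μ^σ(y,w;s)` is nonzero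
only if `ℓ(w) − ℓ(y)` is even and `y < s⋉w` in the Bruhat order. -/
theorem statement_0 (cs : CoxeterSystem M W) (σ : StarInv cs) (K : HeckeBar cs (qq ^ 2))
    (D : TKLData cs σ K) (y w : σ.I) (i : B)
    (hy : cs.length (cs.simple i * (y : W)) < cs.length (y : W))
    (hw : ¬ cs.length (cs.simple i * (w : W)) < cs.length (w : W))
    (hne : D.μs (y : W) (w : W) i ≠ 0) :
    ((cs.length (w : W) : ℤ) - cs.length (y : W)) % 2 = 0 ∧
      BruhatLT cs (y : W) (σ.tw (cs.simple i) (w : W)) :=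
  statement_0_general cs σ K D y w i hw hne

end TwistedKL
end
end

section
/- Let (W,S) be a universal Coxeter system with an S-preserving involution *. Suppose x ∈ W and s ∈ S ∩ I_* (i.e., s = s*) with s ∉ Des_R(x), and let n = ℓ(x). Then c(x⋉s, n+1) = Φ(A(x⋉s, n+1)), where Φ : M_{q²} → ℋ_q is the 𝒜-linear map with Φ(A_w) = c_w for all w ∈ I_*. -/
open Polynomial LaurentPolynomial
open scoped Classical

noncomputable section

namespace TwistedKL

variable {B : Type} {W : Type} [Group W] {M : CoxeterMatrix B}

/-!
In a universal Coxeter system a word is reduced exactly when no two adjacent letters give the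
same simple reflection: `W` acts on such words by "prepend and cancel", and the product of such a
word sends the empty word to the word itself. Consequently reduced expressions are unique, and
for `x = s_1 ⋯ s_n` with `x s` reduced and `s = s*`, the element `x ⋉ s` has the reduced
expression `s_1 ⋯ s_n s s_n* ⋯ s_1*`, while `s_1 ⋯ s_n s` is a reduced `I_*`-expression of it.

At index `n + 1` both recursions look at `s_n`: `c(x ⋉ s, n + 1)` compares the letters `s_n` and
`s_n*` flanking the middle `s`, and `A(x ⋉ s, n + 1)` asks whether the last two letters `s_n, s`
are `*`-fixed. So both vanish unless `s_n = s_n*`, and then both recurse to `x' ⋉ s_n` with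
`x' = s_1 ⋯ s_{n-1}`; induction on `n` and `Φ(A_w) = c_w` finish the proof.
-/

section PushCancel

variable {α : Type*}

def pushCancel (t : α) (L : {L : List α // L.IsChain (· ≠ ·)}) :
    {L : List α // L.IsChain (· ≠ ·)} :=
  if h : L.1.head? = some t then ⟨L.1.tail, L.2.tail⟩
  else ⟨t :: L.1, L.2.cons fun _ hy hty => h (hty ▸ hy)⟩

theorem pushCancel_involutive (t : α) : Function.Involutive (pushCancel t) := by
  rintro ⟨L, hL⟩
  unfold pushCancel
  split_ifs with h₁ h₂ h₂
  · cases L with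
    | nil => simp at h₁
    | cons a L =>
      obtain rfl : a = t := by simpa using h₁
      cases L with
      | nil => simp at h₂
      | cons b L => exact ((List.isChain_cons_cons.1 hL).1 (Option.some.inj h₂).symm).elim
  · cases L with
    | nil => simp at h₁
    | cons a L =>
      obtain rfl : a = t := by simpa using h₁
      rfl
  · rfl
  · simp at h₂

theorem length_pushCancel_le (t : α) (L : {L : List α // L.IsChain (· ≠ ·)}) :
    (pushCancel t L).1.length ≤ L.1.length + 1 := by
  unfold pushCancel
  split_ifs <;> simp only [List.length_tail, List.length_cons] <;> omega

theorem pushCancel_of_head?_ne {t : α} {L : {L : List α // L.IsChain (· ≠ ·)}}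
    (h : L.1.head? ≠ some t) : (pushCancel t L).1 = t :: L.1 := by
  simp [pushCancel, h]

end PushCancel

section ReducedWords

variable {cs : CoxeterSystem M W}

theorem _root_.CoxeterSystem.IsReduced.isChain_map_simple {ω : List B} (hω : cs.IsReduced ω) :
    (ω.map cs.simple).IsChain (· ≠ ·) := by
  induction ω with
  | nil => exact .nil
  | cons a ω ih =>
    refine (ih (hω.drop 1)).cons ?_
    intro _ hy hab
    cases ω with
    | nil => simp at hy
    | cons b ω =>
      obtain rfl : cs.simple b = _ := by simpa using hy
      have hcancel : cs.wordProd (a :: b :: ω) = cs.wordProd ω := by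
        rw [cs.wordProd_cons, cs.wordProd_cons, hab, cs.simple_mul_simple_cancel_left]
      have h := cs.length_wordProd_le ω
      rw [← hcancel, hω.eq] at h
      simp at h

theorem _root_.CoxeterSystem.IsReduced.of_append_left {ω ω' : List B}
    (h : cs.IsReduced (ω ++ ω')) : cs.IsReduced ω := by
  simpa only [List.take_left] using h.take ω.length

theorem _root_.CoxeterSystem.IsReduced.of_append_right {ω ω' : List B}
    (h : cs.IsReduced (ω ++ ω')) : cs.IsReduced ω' := by
  simpa only [List.drop_left] using h.drop ω.length

theorem _root_.CoxeterSystem.IsReduced.append_singleton {ω : List B} {i : B}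
    (hω : cs.IsReduced ω)
    (hi : ¬ cs.length (cs.wordProd ω * cs.simple i) < cs.length (cs.wordProd ω)) :
    cs.IsReduced (ω ++ [i]) := by
  have := cs.length_mul_simple (cs.wordProd ω) i
  rw [CoxeterSystem.IsReduced, cs.wordProd_append, cs.wordProd_singleton, List.length_append,
    List.length_singleton, ← hω.eq]
  omega

end ReducedWords

section NormalForm

variable {cs : CoxeterSystem M W}

theorem isLiftable_pushCancel (hu : IsUniversal cs) :
    M.IsLiftable fun i => (pushCancel_involutive (cs.simple i)).toPerm := by
  intro i i'
  by_cases hs : cs.simple i = cs.simple i'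
  · have h1 : (pushCancel_involutive (cs.simple i)).toPerm *
        (pushCancel_involutive (cs.simple i')).toPerm = 1 := by
      ext L : 1
      simp [hs, pushCancel_involutive (cs.simple i') L]
    rw [h1, one_pow]
  · rcases Nat.eq_zero_or_pos (M i i') with h0 | h0
    · rw [h0, pow_zero]
    · exact absurd (cs.simple_mul_simple_pow i i') (hu i i' hs _ h0)

/-- `w` sends the empty word to the unique reduced word of `w`, read in the simple reflections. -/
def normalFormRep (hu : IsUniversal cs) : W →* Equiv.Perm {L : List W // L.IsChain (· ≠ ·)} :=
  cs.lift ⟨_, isLiftable_pushCancel hu⟩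

theorem normalFormRep_wordProd_cons (hu : IsUniversal cs) (i : B) (ω : List B)
    (L : {L : List W // L.IsChain (· ≠ ·)}) :
    normalFormRep hu (cs.wordProd (i :: ω)) L =
      pushCancel (cs.simple i) (normalFormRep hu (cs.wordProd ω) L) := by
  rw [cs.wordProd_cons, map_mul, Equiv.Perm.mul_apply, normalFormRep, cs.lift_apply_simple]
  rfl

theorem length_normalFormRep_wordProd_le (hu : IsUniversal cs) (ω : List B) :
    (normalFormRep hu (cs.wordProd ω) ⟨[], .nil⟩).1.length ≤ ω.length := by
  induction ω with
  | nil => simp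
  | cons i ω ih =>
    rw [normalFormRep_wordProd_cons]
    exact (length_pushCancel_le _ _).trans (by simpa using ih)

theorem normalFormRep_wordProd_of_isChain (hu : IsUniversal cs) {ω : List B}
    (hω : (ω.map cs.simple).IsChain (· ≠ ·)) :
    (normalFormRep hu (cs.wordProd ω) ⟨[], .nil⟩).1 = ω.map cs.simple := by
  induction ω with
  | nil => simp
  | cons i ω ih =>
    rw [List.map_cons, List.isChain_cons] at hω
    have hL := ih hω.2
    rw [normalFormRep_wordProd_cons,
      pushCancel_of_head?_ne (by rw [hL]; exact fun h => hω.1 _ h rfl), hL, List.map_cons]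

theorem isReduced_iff_isChain_map_simple (hu : IsUniversal cs) {ω : List B} :
    cs.IsReduced ω ↔ (ω.map cs.simple).IsChain (· ≠ ·) := by
  refine ⟨CoxeterSystem.IsReduced.isChain_map_simple,
    fun hω => le_antisymm (cs.length_wordProd_le ω) ?_⟩
  obtain ⟨τ, hτ, hτω⟩ := cs.exists_isReduced (cs.wordProd ω)
  calc ω.length = (normalFormRep hu (cs.wordProd ω) ⟨[], .nil⟩).1.length := by
        rw [normalFormRep_wordProd_of_isChain hu hω, List.length_map]
    _ ≤ τ.length := hτω ▸ length_normalFormRep_wordProd_le hu τ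
    _ = cs.length (cs.wordProd ω) := by rw [hτω, hτ.eq]

theorem map_simple_eq_of_wordProd_eq (hu : IsUniversal cs) {ω ω' : List B}
    (hω : cs.IsReduced ω) (hω' : cs.IsReduced ω') (h : cs.wordProd ω = cs.wordProd ω') :
    ω.map cs.simple = ω'.map cs.simple := by
  rw [← normalFormRep_wordProd_of_isChain hu hω.isChain_map_simple,
    ← normalFormRep_wordProd_of_isChain hu hω'.isChain_map_simple, h]

theorem simple_mul_wordProd_ne (hu : IsUniversal cs) {b c : B} {ρ : List B}
    (h : cs.IsReduced (b :: ρ ++ [c])) :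
    cs.simple b * cs.wordProd ρ ≠ cs.wordProd ρ * cs.simple c := by
  intro heq
  have hmap : (b :: ρ).map cs.simple = (ρ ++ [c]).map cs.simple := by
    refine map_simple_eq_of_wordProd_eq hu h.of_append_left
      (h.of_append_right (ω := [b])) ?_
    rwa [cs.wordProd_cons, cs.wordProd_append, cs.wordProd_singleton]
  have hchain := h.isChain_map_simple
  rw [List.cons_append, List.map_cons, ← hmap, List.map_cons, List.isChain_cons_cons] at hchain
  exact hchain.1 rfl

end NormalForm

section Twisted

variable {cs : CoxeterSystem M W} (σ : StarInv cs)

theorem StarInv.injective : Function.Injective σ.star :=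
  Function.LeftInverse.injective σ.invol

/-- A letter `b*` with `s_{b*} = (s_b)*`, chosen to be `b` itself when `s_b` is `*`-fixed, so that
fixed letters compare equal in `B`. -/
def starIdx (b : B) : B :=
  if σ.star (cs.simple b) = cs.simple b then b else Classical.choose (σ.star_simple b)

theorem simple_starIdx (b : B) : cs.simple (starIdx σ b) = σ.star (cs.simple b) := by
  unfold starIdx
  split_ifs with h
  · exact h.symm
  · exact (Classical.choose_spec (σ.star_simple b)).symm

theorem starIdx_of_fixed {b : B} (hb : σ.star (cs.simple b) = cs.simple b) : starIdx σ b = b :=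
  if_pos hb

def mirrorWord (ω : List B) (i : B) : List B :=
  ω ++ i :: (ω.map (starIdx σ)).reverse

theorem mirrorWord_cons (b : B) (ω : List B) (i : B) :
    mirrorWord σ (b :: ω) i = b :: (mirrorWord σ ω i ++ [starIdx σ b]) := by
  simp [mirrorWord]

theorem mirrorWord_append_singleton (ω : List B) (b i : B) :
    mirrorWord σ (ω ++ [b]) i =
      ω ++ b :: i :: starIdx σ b :: (ω.map (starIdx σ)).reverse := by
  simp [mirrorWord]

theorem isReduced_mirrorWord (hu : IsUniversal cs) {ω : List B} {i : B}
    (hi : σ.star (cs.simple i) = cs.simple i) (h : cs.IsReduced (ω ++ [i])) :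
    cs.IsReduced (mirrorWord σ ω i) := by
  rw [isReduced_iff_isChain_map_simple hu] at h ⊢
  rw [mirrorWord, List.map_append, List.map_cons, List.isChain_split]
  refine ⟨by simpa using h, ?_⟩
  have hmirror : cs.simple i :: (ω.map (starIdx σ)).reverse.map cs.simple =
      (((ω ++ [i]).map cs.simple).map σ.star).reverse := by
    simp [hi, simple_starIdx, Function.comp_def]
  rw [hmirror, List.isChain_reverse, List.isChain_map]
  exact h.imp fun _ _ hab hs => hab (σ.injective hs).symm

theorem tw_one_of_fixed {i : B} (hi : σ.star (cs.simple i) = cs.simple i) :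
    σ.tw (cs.simple i) 1 = cs.simple i := by
  simp [StarInv.tw, hi]

theorem twistWord_append_of_fixed (hu : IsUniversal cs) {i : B}
    (hi : σ.star (cs.simple i) = cs.simple i) {ω : List B} (h : cs.IsReduced (ω ++ [i])) :
    twistWord cs σ (ω ++ [i]) 1 = cs.wordProd (mirrorWord σ ω i) := by
  induction ω with
  | nil => simp [twistWord, mirrorWord, tw_one_of_fixed σ hi]
  | cons b ω ih =>
    have hν := isReduced_mirrorWord σ hu hi h
    rw [mirrorWord_cons] at hν
    have hne := simple_mul_wordProd_ne hu hν
    rw [simple_starIdx] at hne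
    rw [List.cons_append, twistWord, List.foldr_cons, ← twistWord,
      ih (h.of_append_right (ω := [b])), StarInv.tw, if_neg hne, mirrorWord_cons,
      cs.wordProd_cons, cs.wordProd_append, cs.wordProd_singleton, simple_starIdx, mul_assoc]

theorem length_tw_le (b : B) (w : W) : cs.length (σ.tw (cs.simple b) w) ≤ cs.length w + 2 := by
  have hstar : cs.length (σ.star (cs.simple b)) = 1 := by
    rw [← simple_starIdx, cs.length_simple]
  have hleft := cs.length_mul_le (cs.simple b) w
  rw [cs.length_simple] at hleft
  unfold StarInv.tw
  split_ifs
  · omega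
  · have := cs.length_mul_le (cs.simple b * w) (σ.star (cs.simple b))
    omega

theorem length_twistWord_le (ω : List B) : cs.length (twistWord cs σ ω 1) ≤ 2 * ω.length := by
  induction ω with
  | nil => simp [twistWord]
  | cons b ω ih =>
    have := length_tw_le σ b (twistWord cs σ ω 1)
    simp only [twistWord, List.foldr_cons, List.length_cons] at this ih ⊢
    omega

theorem isTwistReduced_append_of_fixed (hu : IsUniversal cs) {ω : List B} {i : B}
    (hi : σ.star (cs.simple i) = cs.simple i) (h : cs.IsReduced (ω ++ [i])) :
    IsTwistReduced cs σ (ω ++ [i]) := by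
  intro ω' hω'
  have hlen : cs.length (twistWord cs σ (ω ++ [i]) 1) = 2 * ω.length + 1 := by
    rw [twistWord_append_of_fixed σ hu hi h, (isReduced_mirrorWord σ hu hi h).eq, mirrorWord,
      List.length_append, List.length_cons, List.length_reverse, List.length_map]
    omega
  have := length_twistWord_le σ ω'
  rw [hω', hlen] at this
  rw [List.length_append, List.length_singleton]
  omega

end Twisted

section Recursions

variable {cs : CoxeterSystem M W} {V : Type*} [Add V] [Zero V]

theorem cRec_twistWord_append (hu : IsUniversal cs) (σ : StarInv cs) (c : W → V)
    (cRec : W → ℕ → V)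
    (hstep : ∀ (ω : List B) (j : ℕ), cs.IsReduced ω → 2 ≤ j → j + 1 ≤ ω.length →
        ω[j - 2]? = ω[j]? →
        cRec (cs.wordProd ω) j =
          c (cs.wordProd (ω.take (j - 1) ++ ω.drop (j + 1))) +
          cRec (cs.wordProd (ω.take (j - 1) ++ ω.drop (j + 1))) (j - 1))
    (hzero : ∀ (ω : List B) (j : ℕ), cs.IsReduced ω →
        ¬ (2 ≤ j ∧ j + 1 ≤ ω.length ∧ ω[j - 2]? = ω[j]?) →
        cRec (cs.wordProd ω) j = 0)
    {ω : List B} {b i : B} (hi : σ.star (cs.simple i) = cs.simple i)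
    (hred : cs.IsReduced (ω ++ [b] ++ [i])) :
    cRec (twistWord cs σ (ω ++ [b] ++ [i]) 1) ((ω ++ [b]).length + 1) =
      if σ.star (cs.simple b) = cs.simple b then
        c (twistWord cs σ (ω ++ [b]) 1) + cRec (twistWord cs σ (ω ++ [b]) 1) (ω.length + 1)
      else 0 := by
  have hν := isReduced_mirrorWord σ hu hi hred
  rw [twistWord_append_of_fixed σ hu hi hred, List.length_append, List.length_singleton]
  rw [mirrorWord_append_singleton] at hν ⊢
  set ν := ω ++ b :: i :: starIdx σ b :: (ω.map (starIdx σ)).reverse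
  -- the letter at (1-based) position `ω.length + 2` of `ν` is `i`, flanked by `b` and `b*`
  have hb₁ : ν[ω.length + 2 - 2]? = some b := by
    rw [Nat.add_sub_cancel, List.getElem?_append_right le_rfl, Nat.sub_self]; rfl
  have hb₂ : ν[ω.length + 2]? = some (starIdx σ b) := by
    rw [List.getElem?_append_right (by omega), Nat.add_sub_cancel_left]; rfl
  split_ifs with hb
  · rw [hstep ν (ω.length + 2) hν (by omega) (by simp [ν])
      (by rw [hb₁, hb₂, starIdx_of_fixed σ hb]),
      twistWord_append_of_fixed σ hu hb hred.of_append_left]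
    simp [ν, mirrorWord, add_assoc, List.take_length_add_append, List.drop_length_add_append]
  · refine hzero ν (ω.length + 2) hν fun ⟨_, _, h⟩ => hb ?_
    rw [hb₁, hb₂, Option.some_inj] at h
    rw [← simple_starIdx, ← h]

theorem aRec_twistWord_append (σ : StarInv cs) (A : σ.I → V) (aRec : W → ℕ → V)
    (hstep : ∀ (ω : List B) (i' i'' : B), IsTwistReduced cs σ (ω ++ [i', i'']) →
        σ.star (cs.simple i') = cs.simple i' → σ.star (cs.simple i'') = cs.simple i'' →
        aRec (twistWord cs σ (ω ++ [i', i'']) 1) (ω.length + 2) =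
          A ⟨twistWord cs σ (ω ++ [i']) 1, twistWord_mem σ _ σ.one_mem⟩ +
          aRec (twistWord cs σ (ω ++ [i']) 1) (ω.length + 1))
    (hzero : ∀ (ω : List B) (j : ℕ), IsTwistReduced cs σ ω →
        ¬ (2 ≤ j ∧ j + 1 ≤ ω.length ∧ ω[j - 2]? = ω[j]?) →
        ¬ (j = ω.length ∧ 2 ≤ ω.length ∧
            ∀ b ∈ ω.drop (ω.length - 2), σ.star (cs.simple b) = cs.simple b) →
        aRec (twistWord cs σ ω 1) j = 0)
    {ω : List B} {b i : B} (hi : σ.star (cs.simple i) = cs.simple i)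
    (hred : IsTwistReduced cs σ (ω ++ [b] ++ [i])) :
    aRec (twistWord cs σ (ω ++ [b] ++ [i]) 1) ((ω ++ [b]).length + 1) =
      if σ.star (cs.simple b) = cs.simple b then
        A ⟨twistWord cs σ (ω ++ [b]) 1, twistWord_mem σ _ σ.one_mem⟩ +
          aRec (twistWord cs σ (ω ++ [b]) 1) (ω.length + 1)
      else 0 := by
  rw [List.append_assoc, List.singleton_append] at hred ⊢
  rw [List.length_append, List.length_singleton]
  split_ifs with hb
  · exact hstep ω b i hred hb hi
  · exact hzero _ _ hred (by simp) fun ⟨_, _, h⟩ => hb (h b (by simp))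

end Recursions

theorem statement_19_general (cs : CoxeterSystem M W) (hu : IsUniversal cs) (σ : StarInv cs)
    (KD : KLData cs) (K2 : HeckeBar cs (qq ^ 2)) (D : TKLData cs σ K2)
    (cc : W → ℕ → KD.carrier)
    (hcca : ∀ (ω : List B) (j : ℕ), cs.IsReduced ω → 2 ≤ j → j + 1 ≤ ω.length →
        ω[j - 2]? = ω[j]? →
        cc (cs.wordProd ω) j =
          KD.c (cs.wordProd (ω.take (j - 1) ++ ω.drop (j + 1))) +
          cc (cs.wordProd (ω.take (j - 1) ++ ω.drop (j + 1))) (j - 1))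
    (hcc0 : ∀ (ω : List B) (j : ℕ), cs.IsReduced ω →
        ¬ (2 ≤ j ∧ j + 1 ≤ ω.length ∧ ω[j - 2]? = ω[j]?) →
        cc (cs.wordProd ω) j = 0)
    (AB : W → ℕ → D.Mod)
    (hABb : ∀ (ω : List B) (i' i'' : B), IsTwistReduced cs σ (ω ++ [i', i'']) →
        σ.star (cs.simple i') = cs.simple i' → σ.star (cs.simple i'') = cs.simple i'' →
        AB (twistWord cs σ (ω ++ [i', i'']) 1) (ω.length + 2) =
          D.A ⟨twistWord cs σ (ω ++ [i']) 1, twistWord_mem σ _ σ.one_mem⟩ +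
          AB (twistWord cs σ (ω ++ [i']) 1) (ω.length + 1))
    (hAB0 : ∀ (ω : List B) (j : ℕ), IsTwistReduced cs σ ω →
        ¬ (2 ≤ j ∧ j + 1 ≤ ω.length ∧ ω[j - 2]? = ω[j]?) →
        ¬ (j = ω.length ∧ 2 ≤ ω.length ∧
            ∀ b ∈ ω.drop (ω.length - 2), σ.star (cs.simple b) = cs.simple b) →
        AB (twistWord cs σ ω 1) j = 0)
    (i : B) (hsi : σ.star (cs.simple i) = cs.simple i)
    (x : W) (hx : ¬ cs.length (x * cs.simple i) < cs.length x) :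
    ∀ Φ : D.Mod →ₗ[A𝕃] KD.carrier,
      (∀ w : σ.I, Φ (D.A w) = KD.c (w : W)) →
      cc (twAct cs σ x (cs.simple i)) (cs.length x + 1) =
        Φ (AB (twAct cs σ x (cs.simple i)) (cs.length x + 1)) := by
  intro Φ hΦ
  have key : ∀ (ω : List B) (i : B), cs.IsReduced (ω ++ [i]) →
      σ.star (cs.simple i) = cs.simple i →
      cc (twistWord cs σ (ω ++ [i]) 1) (ω.length + 1) =
        Φ (AB (twistWord cs σ (ω ++ [i]) 1) (ω.length + 1)) := by
    intro ω
    induction ω using List.reverseRecOn with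
    | nil =>
      intro i hred hi
      have hTR := isTwistReduced_append_of_fixed σ hu hi hred
      simp only [List.nil_append, List.length_nil, zero_add] at hred hTR ⊢
      rw [hAB0 [i] 1 hTR (by simp) (by simp), map_zero]
      have := hcc0 [i] 1 hred (by simp)
      rwa [cs.wordProd_singleton, ← tw_one_of_fixed σ hi] at this
    | append_singleton ω b ih =>
      intro i hred hi
      rw [cRec_twistWord_append hu σ KD.c cc hcca hcc0 hi hred,
        aRec_twistWord_append σ D.A AB hABb hAB0 hi
          (isTwistReduced_append_of_fixed σ hu hi hred)]
      split_ifs with hb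
      · rw [map_add, hΦ, ih b hred.of_append_left hb]
      · rw [map_zero]
  obtain ⟨hω, hωx⟩ := Classical.choose_spec (cs.exists_isReduced x)
  set ω := Classical.choose (cs.exists_isReduced x)
  have htw : twAct cs σ x (cs.simple i) = twistWord cs σ (ω ++ [i]) 1 := by
    rw [twistWord, List.foldr_append, List.foldr_cons, List.foldr_nil, tw_one_of_fixed σ hsi]
    rfl
  have hωi : cs.IsReduced (ω ++ [i]) := hω.append_singleton (by rwa [hωx] at hx)
  rw [htw, hωx, hω.eq]
  exact key ω i hωi hsi

/-- in a universal Coxeter system, if `s ∈ S ∩ I_*` and `s ∉ Des_R(x)`, then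
`c(x⋉s, n+1) = Φ(A(x⋉s, n+1))` where `n = ℓ(x)` and `Φ : M_{q²} → ℋ_q` is the `𝒜`-linear
map with `Φ(A_w) = c_w`.  Here `c(·,·)` and `A(·,·)` are the recursively defined elements,
passed as functions characterized by their recursions on reduced expressions. -/
theorem statement_19 (cs : CoxeterSystem M W) (hu : IsUniversal cs) (σ : StarInv cs)
    (KD : KLData cs) (K2 : HeckeBar cs (qq ^ 2)) (D : TKLData cs σ K2)
    (cc : W → ℕ → KD.carrier)
    (hcca : ∀ (ω : List B) (j : ℕ), cs.IsReduced ω → 2 ≤ j → j + 1 ≤ ω.length →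
        ω[j - 2]? = ω[j]? →
        cc (cs.wordProd ω) j =
          KD.c (cs.wordProd (ω.take (j - 1) ++ ω.drop (j + 1))) +
          cc (cs.wordProd (ω.take (j - 1) ++ ω.drop (j + 1))) (j - 1))
    (hcc0 : ∀ (ω : List B) (j : ℕ), cs.IsReduced ω →
        ¬ (2 ≤ j ∧ j + 1 ≤ ω.length ∧ ω[j - 2]? = ω[j]?) →
        cc (cs.wordProd ω) j = 0)
    (AB : W → ℕ → D.Mod)
    (hABa : ∀ (ω : List B) (j : ℕ), IsTwistReduced cs σ ω → 2 ≤ j → j + 1 ≤ ω.length →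
        ω[j - 2]? = ω[j]? →
        AB (twistWord cs σ ω 1) j =
          D.A ⟨twistWord cs σ (ω.take (j - 1) ++ ω.drop (j + 1)) 1,
            twistWord_mem σ _ σ.one_mem⟩ +
          AB (twistWord cs σ (ω.take (j - 1) ++ ω.drop (j + 1)) 1) (j - 1))
    (hABb : ∀ (ω : List B) (i' i'' : B), IsTwistReduced cs σ (ω ++ [i', i'']) →
        σ.star (cs.simple i') = cs.simple i' → σ.star (cs.simple i'') = cs.simple i'' →
        AB (twistWord cs σ (ω ++ [i', i'']) 1) (ω.length + 2) =
          D.A ⟨twistWord cs σ (ω ++ [i']) 1, twistWord_mem σ _ σ.one_mem⟩ +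
          AB (twistWord cs σ (ω ++ [i']) 1) (ω.length + 1))
    (hAB0 : ∀ (ω : List B) (j : ℕ), IsTwistReduced cs σ ω →
        ¬ (2 ≤ j ∧ j + 1 ≤ ω.length ∧ ω[j - 2]? = ω[j]?) →
        ¬ (j = ω.length ∧ 2 ≤ ω.length ∧
            ∀ b ∈ ω.drop (ω.length - 2), σ.star (cs.simple b) = cs.simple b) →
        AB (twistWord cs σ ω 1) j = 0)
    (i : B) (hsi : σ.star (cs.simple i) = cs.simple i)
    (x : W) (hx : ¬ cs.length (x * cs.simple i) < cs.length x) :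
    ∀ Φ : D.Mod →ₗ[A𝕃] KD.carrier,
      (∀ w : σ.I, Φ (D.A w) = KD.c (w : W)) →
      cc (twAct cs σ x (cs.simple i)) (cs.length x + 1) =
        Φ (AB (twAct cs σ x (cs.simple i)) (cs.length x + 1)) :=
  statement_19_general cs hu σ KD K2 D cc hcca hcc0 AB hABb hAB0 i hsi x hx

end TwistedKL
end
end
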